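/- arXiv:2206.00237 — 2 statements merged into one kernel-verified Lean document; each statement's English description precedes it below -/
import Mathlib

section
/- In the matroid M(Υ) of a gain signed graph, an edge set containing two distinct hyperfrustrated edge components is dependent. -/
/- A formalization framework for gain signed graphs (Anderson–Su–Zaslavsky).
A graph may have links/loops (ordered pair of endpoints), half edges and loose
edges.  Edges carry a sign, an orientation (a sign at each end) and a gain in an
abelian group, recorded relative to the stored orientation. -/

namespace GSG

inductive EdgeEnds (V : Type*) where
  | link : V → V → EdgeEnds V
  | half : V → EdgeEnds V
  | loose : EdgeEnds V

/-- A gain signed graph (data part; well-formedness is `Proper`). -/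
structure GSGraph (V E G : Type*) [AddCommGroup G] where
  shape : E → EdgeEnds V
  sign : E → ℤˣ
  tau1 : E → ℤˣ
  tau2 : E → ℤˣ
  gain : E → G

/-- A directed step: an edge traversed forwards or backwards
(relative to the recorded order of its endpoints). -/
structure DStep (E : Type*) where
  edge : E
  fwd : Bool

/-- The reverse of a walk. -/
def revWalk {E : Type*} (W : List (DStep E)) : List (DStep E) :=
  (W.map fun d => ⟨d.edge, !d.fwd⟩).reverse

/-- The edge set of a walk. -/
def stepEdges {E : Type*} (W : List (DStep E)) : Set E := {e | e ∈ W.map DStep.edge}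

/-- An ultrawalk: a walk together with an optional initial and final half edge. -/
structure UWalk (V E : Type*) where
  firstHalf : Option E
  startV : V
  steps : List (DStep E)
  endV : V
  lastHalf : Option E

/-- The edge set of an ultrawalk. -/
def uedges {V E : Type*} (W : UWalk V E) : Set E :=
  {e | W.firstHalf = some e ∨ e ∈ W.steps.map DStep.edge ∨ W.lastHalf = some e}

namespace GSGraph

variable {V E G : Type*} [AddCommGroup G] (Υ : GSGraph V E G)

/-- Well-formedness: the two end-signs of a link or loop multiply to minus the
edge sign; half edges are negative; loose edges are positive. -/
def Proper : Prop :=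
  (∀ e v w, Υ.shape e = .link v w → Υ.tau1 e * Υ.tau2 e = - Υ.sign e) ∧
  (∀ e v, Υ.shape e = .half v → Υ.sign e = -1) ∧
  (∀ e, Υ.shape e = .loose → Υ.sign e = 1)

/-- Source vertex of a directed step (defined for links/loops). -/
def srcO (d : DStep E) : Option V :=
  match Υ.shape d.edge with
  | .link v w => some (if d.fwd then v else w)
  | _ => none

/-- Target vertex of a directed step. -/
def tgtO (d : DStep E) : Option V :=
  match Υ.shape d.edge with
  | .link v w => some (if d.fwd then w else v)
  | _ => none

/-- The orientation sign at the source end of a step. -/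
def tauSrc (d : DStep E) : ℤˣ := if d.fwd then Υ.tau1 d.edge else Υ.tau2 d.edge

/-- The orientation sign at the target end of a step. -/
def tauTgt (d : DStep E) : ℤˣ := if d.fwd then Υ.tau2 d.edge else Υ.tau1 d.edge

/-- `W` is a walk: all its edges are links or loops and consecutive steps chain. -/
def IsSteps (W : List (DStep E)) : Prop :=
  (∀ d ∈ W, ∃ v w, Υ.shape d.edge = .link v w) ∧
  List.Chain' (fun a b => Υ.tgtO a = Υ.srcO b) W

def headSrc (W : List (DStep E)) : Option V := W.head?.bind Υ.srcO

def lastTgt (W : List (DStep E)) : Option V := W.getLast?.bind Υ.tgtO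

/-- The sign of a walk: product of edge signs. -/
def walkSign (W : List (DStep E)) : ℤˣ := (W.map fun d => Υ.sign d.edge).prod

/-- The gain of a walk:
`φ(W) = −∑ φ(eᵢ)·σ(W_{0,i−1})·τ(u_{i−1},eᵢ)`, in recursive form. -/
def walkGain : List (DStep E) → G
  | [] => 0
  | d :: rest =>
      -((Υ.tauSrc d : ℤ) • Υ.gain d.edge) + (Υ.sign d.edge : ℤ) • walkGain rest

def stepVerts (W : List (DStep E)) : Set V := {v | some v ∈ W.map Υ.srcO}

def pathVerts (W : List (DStep E)) : Set V :=
  Υ.stepVerts W ∪ {v | some v = Υ.lastTgt W}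

/-- `W` is a (possibly empty) walk from `u` to `v`. -/
def FromTo (W : List (DStep E)) (u v : V) : Prop :=
  (W = [] → u = v) ∧ (W ≠ [] → Υ.headSrc W = some u ∧ Υ.lastTgt W = some v)

/-- A closed walk tracing a circle: no repeated edges, no repeated vertices. -/
def IsCircleWalk (W : List (DStep E)) : Prop :=
  W ≠ [] ∧ Υ.IsSteps W ∧ Υ.lastTgt W = Υ.headSrc W ∧
  (W.map DStep.edge).Nodup ∧ (W.map Υ.srcO).Nodup

/-- A walk tracing a path: no repeated edges or vertices. -/
def IsPathWalk (W : List (DStep E)) : Prop :=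
  Υ.IsSteps W ∧ (W.map DStep.edge).Nodup ∧
  (W.map Υ.srcO ++ [Υ.lastTgt W]).Nodup

/-- Well-formedness of an ultrawalk. -/
def IsUWalk (W : UWalk V E) : Prop :=
  Υ.IsSteps W.steps ∧ Υ.FromTo W.steps W.startV W.endV ∧
  (∀ e, W.firstHalf = some e → Υ.shape e = .half W.startV) ∧
  (∀ e, W.lastHalf = some e → Υ.shape e = .half W.endV)

/-- The gain of an ultrawalk:
`φ(W) = τ(u₀,e₀)φ(e₀) + φ(W₀ₗ) − φ(e_{l+1})·σ(W₀ₗ)·τ(u_l,e_{l+1})`. -/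
def ugain (W : UWalk V E) : G :=
  (match W.firstHalf with
   | some e => (Υ.tau1 e : ℤ) • Υ.gain e
   | none => 0)
  + Υ.walkGain W.steps
  + (match W.lastHalf with
     | some e => -(((Υ.walkSign W.steps * Υ.tau1 e : ℤˣ) : ℤ) • Υ.gain e)
     | none => 0)

/-- A circuit walk around a positive circle. -/
def IsPosCircleWalk (W : UWalk V E) : Prop :=
  W.firstHalf = none ∧ W.lastHalf = none ∧ Υ.IsCircleWalk W.steps ∧
  Υ.walkSign W.steps = 1 ∧ Υ.headSrc W.steps = some W.startV ∧ W.endV = W.startV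

/-- A circuit walk around a handcuff whose two figures (circles or half edges)
have signs `s₁` and `s₂` (a half-edge figure counts as sign `-1`).  The three
cases: circle–circle, half-edge–circle, half-edge–half-edge. -/
def IsHandcuffWalk (s₁ s₂ : ℤˣ) (W : UWalk V E) : Prop :=
  (∃ W₁ P W₂ u₁ u₂,
    W.firstHalf = none ∧ W.lastHalf = none ∧
    W.steps = W₁ ++ P ++ W₂ ++ revWalk P ∧
    Υ.IsSteps W.steps ∧
    Υ.IsCircleWalk W₁ ∧ Υ.walkSign W₁ = s₁ ∧ Υ.headSrc W₁ = some u₁ ∧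
    Υ.IsCircleWalk W₂ ∧ Υ.walkSign W₂ = s₂ ∧ Υ.headSrc W₂ = some u₂ ∧
    Υ.IsPathWalk P ∧ Υ.FromTo P u₁ u₂ ∧
    W.startV = u₁ ∧ W.endV = u₁ ∧
    (∀ x, x ∈ Υ.stepVerts W₁ → x ∈ Υ.stepVerts W₂ → P = [] ∧ x = u₁) ∧
    (∀ x, x ∈ Υ.pathVerts P →
      (x ∈ Υ.stepVerts W₁ → x = u₁) ∧ (x ∈ Υ.stepVerts W₂ → x = u₂)) ∧
    ((W₁ ++ P ++ W₂).map DStep.edge).Nodup) ∨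
  (∃ e₁ P W₂ u₂,
    W.firstHalf = some e₁ ∧ W.lastHalf = some e₁ ∧
    Υ.shape e₁ = .half W.startV ∧ W.endV = W.startV ∧ s₁ = -1 ∧
    W.steps = P ++ W₂ ++ revWalk P ∧ Υ.IsSteps W.steps ∧
    Υ.IsCircleWalk W₂ ∧ Υ.walkSign W₂ = s₂ ∧ Υ.headSrc W₂ = some u₂ ∧
    Υ.IsPathWalk P ∧ Υ.FromTo P W.startV u₂ ∧
    (∀ x, x ∈ Υ.pathVerts P → x ∈ Υ.stepVerts W₂ → x = u₂) ∧
    (W.startV ∈ Υ.stepVerts W₂ → P = []) ∧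
    ((P ++ W₂).map DStep.edge).Nodup) ∨
  (∃ e₁ e₂,
    W.firstHalf = some e₁ ∧ W.lastHalf = some e₂ ∧ e₁ ≠ e₂ ∧
    Υ.shape e₁ = .half W.startV ∧ Υ.shape e₂ = .half W.endV ∧
    s₁ = -1 ∧ s₂ = -1 ∧
    Υ.IsPathWalk W.steps ∧ Υ.FromTo W.steps W.startV W.endV)

/-- A circuit walk of a sign circuit: a positive circle, or a handcuff of two
negative figures (loose-edge circuits are handled separately). -/
def IsSignCircuitWalk (W : UWalk V E) : Prop :=
  Υ.IsPosCircleWalk W ∨ Υ.IsHandcuffWalk (-1) (-1) W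

/-- `C` is a sign circuit: a loose edge, a positive circle, or a handcuff of
two negative figures joined by a minimal path. -/
def SignCircuit (C : Set E) : Prop :=
  (∃ e, Υ.shape e = .loose ∧ C = {e}) ∨
  (∃ W : UWalk V E, Υ.IsSignCircuitWalk W ∧ uedges W = C)

/-- `C` is neutral: every way of computing its gain gives `0`. -/
def NeutralOn (C : Set E) : Prop :=
  (∀ e, Υ.shape e = .loose → C = {e} → Υ.gain e = 0) ∧
  (∀ W : UWalk V E, Υ.IsSignCircuitWalk W → uedges W = C → Υ.ugain W = 0)

/-- An edge set is hyperbalanced if every sign circuit contained in it is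
neutral. -/
def Hyperbalanced (S : Set E) : Prop :=
  ∀ C, C ⊆ S → Υ.SignCircuit C → Υ.NeutralOn C

/-- Adjacency through an edge of `S`. -/
def joined (S : Set E) (a b : V) : Prop :=
  ∃ e ∈ S, Υ.shape e = .link a b ∨ Υ.shape e = .link b a

/-- Connectivity in the spanning subgraph `(V, S)`. -/
def conn (S : Set E) : V → V → Prop := Relation.ReflTransGen (Υ.joined S)

/-- The vertex component of `v` in `(V, S)`. -/
def comp (S : Set E) (v : V) : Set V := {w | Υ.conn S v w}

/-- Incidence of an edge with a vertex. -/
def touches (e : E) (v : V) : Prop :=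
  match Υ.shape e with
  | .link a b => v = a ∨ v = b
  | .half a => v = a
  | .loose => False

/-- The component of `v` in `(V,S)` is sign-balanced: it contains no half edge
and no negative circle. -/
def BalancedAt (S : Set E) (v : V) : Prop :=
  (∀ e ∈ S, ∀ u, Υ.shape e = .half u → ¬ Υ.conn S v u) ∧
  (∀ W : List (DStep E), Υ.IsCircleWalk W → (∀ d ∈ W, d.edge ∈ S) →
     (∃ u, Υ.headSrc W = some u ∧ Υ.conn S v u) → Υ.walkSign W = 1)

/-- Number of sign-balanced components of `(V,S)`. -/
noncomputable def bBal (S : Set E) : ℕ :=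
  Nat.card {X : Set V // ∃ v, X = Υ.comp S v ∧ Υ.BalancedAt S v}

/-- Number of components of `(V,S)`. -/
noncomputable def nComp (S : Set E) : ℕ :=
  Nat.card {X : Set V // ∃ v, X = Υ.comp S v}

/-- `δ(S)`: 0 if `S` is hyperbalanced, 1 if hyperfrustrated. -/
noncomputable def delta (S : Set E) : ℕ := by
  classical exact if Υ.Hyperbalanced S then 0 else 1

/-- The rank function of the matroid `M(Υ)`:
`rk(S) = n − b_Σ(S) + δ_Υ(S)`. -/
noncomputable def rk [Fintype V] (S : Set E) : ℕ :=
  Fintype.card V - Υ.bBal S + Υ.delta S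

/-- Matroid closure with respect to `rk`. -/
noncomputable def cl [Fintype V] (S : Set E) : Set E :=
  {e | Υ.rk (insert e S) = Υ.rk S}

/-- Two edges of `S` lie in the same edge component of `S`. -/
def econn (S : Set E) (e f : E) : Prop :=
  e ∈ S ∧ f ∈ S ∧ (e = f ∨ ∃ v w, Υ.touches e v ∧ Υ.touches f w ∧ Υ.conn S v w)

/-- `C` is an edge component of `S`. -/
def EdgeComponent (S C : Set E) : Prop := ∃ e ∈ S, C = {f | Υ.econn S e f}

/-- Sign switching by `ζ : V → {±1}`. -/
def signSwitch (ζ : V → ℤˣ) : GSGraph V E G where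
  shape := Υ.shape
  sign := fun e =>
    match Υ.shape e with
    | .link v w => ζ v * Υ.sign e * ζ w
    | _ => Υ.sign e
  tau1 := fun e =>
    match Υ.shape e with
    | .link v _ => ζ v * Υ.tau1 e
    | .half v => ζ v * Υ.tau1 e
    | .loose => Υ.tau1 e
  tau2 := fun e =>
    match Υ.shape e with
    | .link _ w => ζ w * Υ.tau2 e
    | _ => Υ.tau2 e
  gain := Υ.gain

/-- Gain switching by `θ : V → G`:
`φ^θ(e_{vw}) = τ(v,e)θ(v) + φ(e) + τ(w,e)θ(w)`. -/
def gainSwitch (θ : V → G) : GSGraph V E G where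
  shape := Υ.shape
  sign := Υ.sign
  tau1 := Υ.tau1
  tau2 := Υ.tau2
  gain := fun e =>
    match Υ.shape e with
    | .link v w => (Υ.tau1 e : ℤ) • θ v + Υ.gain e + (Υ.tau2 e : ℤ) • θ w
    | .half v => (Υ.tau1 e : ℤ) • θ v + Υ.gain e
    | .loose => Υ.gain e

/-- Reorientation by `ρ : E → {±1}`: negates the end signs and the gain of each
edge with `ρ e = -1`. -/
def reorient (ρ : E → ℤˣ) : GSGraph V E G where
  shape := Υ.shape
  sign := Υ.sign
  tau1 := fun e => ρ e * Υ.tau1 e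
  tau2 := fun e => ρ e * Υ.tau2 e
  gain := fun e => (ρ e : ℤ) • Υ.gain e

end GSGraph

end GSG

/-! Deleting a suitable edge of a sign circuit never increases the number `b_Σ` of balanced
components. A positive circle may lose any edge: a negative circle through that edge would
combine with the rest of the positive circle into a negative closed walk avoiding it. A handcuff
may lose an edge of its first figure, since its second, negative figure keeps the component
unbalanced. Sign circuits in distinct edge components are disjoint, so two edges `f₁, f₂` can be
deleted in this way, and since `n - b_Σ(T) ≤ |T|` for every `T` and `δ ≤ 1`,
`rk S ≤ n - b_Σ(S \ {f₁, f₂}) + 1 ≤ |S| - 1`. -/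

lemma List.exists_eq_append_cons_append_cons_of_not_nodup_map {α β : Type*} (f : α → β)
    {l : List α} (h : ¬ (l.map f).Nodup) :
    ∃ (A B C : List α) (b c : α), l = A ++ b :: B ++ c :: C ∧ f b = f c := by
  induction l with
  | nil => simp at h
  | cons a l ih =>
    by_cases ha : f a ∈ l.map f
    · obtain ⟨c, hc, hfc⟩ := List.mem_map.1 ha
      obtain ⟨B, C, rfl⟩ := List.append_of_mem hc
      exact ⟨[], B, C, a, c, rfl, hfc.symm⟩
    · obtain ⟨A, B, C, b, c, rfl, hbc⟩ := ih fun hl => h (List.nodup_cons.2 ⟨ha, hl⟩)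
      exact ⟨a :: A, B, C, b, c, rfl, hbc⟩

namespace GSG

namespace GSGraph

variable {V E G : Type*} [AddCommGroup G] (Υ : GSGraph V E G)

section Connectivity

variable {S T : Set E} {e f : E} {x y : V}

lemma joined_symm (h : Υ.joined S x y) : Υ.joined S y x := by
  obtain ⟨e, he, h | h⟩ := h
  exacts [⟨e, he, Or.inr h⟩, ⟨e, he, Or.inl h⟩]

lemma conn_refl (S : Set E) (x : V) : Υ.conn S x x := .refl

lemma conn_of_joined (h : Υ.joined S x y) : Υ.conn S x y := .single h

lemma conn_symm (h : Υ.conn S x y) : Υ.conn S y x := by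
  induction h with
  | refl => exact .refl
  | tail _ h ih => exact (Υ.conn_of_joined (Υ.joined_symm h)).trans ih

lemma conn_mono (hST : S ⊆ T) (h : Υ.conn S x y) : Υ.conn T x y :=
  Relation.ReflTransGen.mono (fun _ _ ⟨e, he, hsh⟩ => ⟨e, hST he, hsh⟩) _ _ h

lemma comp_eq_of_conn (h : Υ.conn S x y) : Υ.comp S x = Υ.comp S y :=
  Set.ext fun _ => ⟨fun h' => (Υ.conn_symm h).trans h', fun h' => h.trans h'⟩

lemma conn_of_eq_or_eq {a b : V} (h : Υ.conn T x y) (ha : a = x ∨ a = y) (hb : b = x ∨ b = y) :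
    Υ.conn T a b := by
  rcases ha with rfl | rfl <;> rcases hb with rfl | rfl
  exacts [.refl, h, Υ.conn_symm h, .refl]

lemma touches_link {a b : V} (he : Υ.shape e = .link a b) : Υ.touches e x ↔ x = a ∨ x = b := by
  simp only [touches, he]

lemma conn_of_touches (hf : f ∈ S) (hx : Υ.touches f x) (hy : Υ.touches f y) :
    Υ.conn S x y := by
  simp only [touches] at hx hy
  cases hsh : Υ.shape f with
  | link a b =>
    simp only [hsh] at hx hy
    exact Υ.conn_of_eq_or_eq (Υ.conn_of_joined ⟨f, hf, Or.inl hsh⟩) hx hy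
  | half a =>
    simp only [hsh] at hx hy
    exact hx ▸ hy ▸ .refl
  | loose => simp only [hsh] at hx

lemma conn_insert_imp (h : Υ.conn (insert e T) x y) :
    Υ.conn T x y ∨ ∃ w, Υ.touches e w ∧ Υ.conn T x w := by
  induction h with
  | refl => exact .inl .refl
  | @tail c y _ hcy ih =>
    rcases ih with hxc | hw
    · obtain ⟨g, rfl | hg, hsh⟩ := hcy
      · refine .inr ⟨c, ?_, hxc⟩
        rcases hsh with hsh | hsh <;> simp [touches, hsh]
      · exact .inl (hxc.tail ⟨g, hg, hsh⟩)
    · exact .inr hw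

lemma conn_diff_iff (hf : ∀ a b, Υ.shape f = .link a b → Υ.conn (S \ {f}) a b) :
    Υ.conn (S \ {f}) x y ↔ Υ.conn S x y := by
  refine ⟨Υ.conn_mono Set.sdiff_subset, fun h => ?_⟩
  refine Relation.ReflTransGen.lift' id (fun a b ⟨g, hg, hsh⟩ => ?_) _ _ h
  by_cases hgf : g = f
  · subst hgf
    rcases hsh with hsh | hsh
    exacts [hf a b hsh, Υ.conn_symm (hf b a hsh)]
  · exact Υ.conn_of_joined ⟨g, ⟨hg, hgf⟩, hsh⟩

lemma conn_diff_iff_of_not_link (hf : ∀ a b, Υ.shape f ≠ .link a b) :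
    Υ.conn (S \ {f}) x y ↔ Υ.conn S x y :=
  Υ.conn_diff_iff fun a b h => (hf a b h).elim

end Connectivity

section Walks

variable {S T : Set E} {L L₁ L₂ : List (DStep E)} {d d₀ d₁ : DStep E} {u v w x : V}

def flipStep (d : DStep E) : DStep E := ⟨d.edge, !d.fwd⟩

lemma srcO_flipStep (d : DStep E) : Υ.srcO (flipStep d) = Υ.tgtO d := by
  unfold srcO tgtO flipStep
  cases Υ.shape d.edge <;> cases d.fwd <;> rfl

lemma tgtO_flipStep (d : DStep E) : Υ.tgtO (flipStep d) = Υ.srcO d := by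
  unfold srcO tgtO flipStep
  cases Υ.shape d.edge <;> cases d.fwd <;> rfl

lemma eq_or_eq_flipStep_of_edge_eq (h : d₁.edge = d₀.edge) : d₁ = d₀ ∨ d₁ = flipStep d₀ := by
  obtain ⟨e₀, b₀⟩ := d₀
  obtain ⟨e₁, b₁⟩ := d₁
  cases h
  cases b₀ <;> cases b₁ <;> simp [flipStep]

lemma revWalk_cons (d : DStep E) (L : List (DStep E)) :
    revWalk (d :: L) = revWalk L ++ [flipStep d] := by
  simp [revWalk, flipStep]

lemma walkSign_append (L₁ L₂ : List (DStep E)) :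
    Υ.walkSign (L₁ ++ L₂) = Υ.walkSign L₁ * Υ.walkSign L₂ := by
  simp [walkSign]

lemma walkSign_cons (d : DStep E) (L : List (DStep E)) :
    Υ.walkSign (d :: L) = Υ.sign d.edge * Υ.walkSign L := by
  simp [walkSign]

lemma walkSign_revWalk (L : List (DStep E)) : Υ.walkSign (revWalk L) = Υ.walkSign L := by
  simp [walkSign, revWalk, List.prod_reverse, Function.comp_def]

lemma exists_link_of_srcO_eq_some (h : Υ.srcO d = some u) :
    ∃ a b, Υ.shape d.edge = .link a b := by
  unfold srcO at h
  split at h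
  · exact ⟨_, _, ‹_›⟩
  · cases h

lemma exists_tgtO_eq_some_of_link {a b : V} (h : Υ.shape d.edge = .link a b) :
    ∃ w, Υ.tgtO d = some w := by
  simp [tgtO, h]

lemma touches_iff_of_step (hu : Υ.srcO d = some u) (hw : Υ.tgtO d = some w) :
    Υ.touches d.edge x ↔ x = u ∨ x = w := by
  obtain ⟨a, b, hab⟩ := Υ.exists_link_of_srcO_eq_some hu
  simp only [srcO, tgtO, hab, Option.some.injEq] at hu hw
  rw [Υ.touches_link hab, ← hu, ← hw]
  cases d.fwd <;> simp [or_comm]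

lemma isSteps_iff : Υ.IsSteps L ↔
    (∀ d ∈ L, ∃ a b, Υ.shape d.edge = .link a b) ∧
      List.IsChain (fun d₁ d₂ => Υ.tgtO d₁ = Υ.srcO d₂) L := Iff.rfl

lemma touches_of_srcO_eq_some (h : Υ.srcO d = some u) : Υ.touches d.edge u := by
  obtain ⟨a, b, hab⟩ := Υ.exists_link_of_srcO_eq_some h
  obtain ⟨w, hw⟩ := Υ.exists_tgtO_eq_some_of_link hab
  exact (Υ.touches_iff_of_step h hw).2 (.inl rfl)

/-- A recursive form of `IsSteps ∧ FromTo` (see `walkIn_iff`) that splits along `++`. -/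
def WalkIn (T : Set E) : List (DStep E) → V → V → Prop
  | [], u, v => u = v
  | d :: L, u, v => d.edge ∈ T ∧ Υ.srcO d = some u ∧ ∃ w, Υ.tgtO d = some w ∧ WalkIn T L w v

lemma walkIn_nil : Υ.WalkIn T [] u v ↔ u = v := Iff.rfl

lemma walkIn_cons : Υ.WalkIn T (d :: L) u v ↔
    d.edge ∈ T ∧ Υ.srcO d = some u ∧ ∃ w, Υ.tgtO d = some w ∧ Υ.WalkIn T L w v := Iff.rfl

lemma walkIn_append :
    Υ.WalkIn T (L₁ ++ L₂) u w ↔ ∃ v, Υ.WalkIn T L₁ u v ∧ Υ.WalkIn T L₂ v w := by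
  induction L₁ generalizing u with
  | nil => simp [walkIn_nil]
  | cons d L₁ ih =>
    simp only [List.cons_append, walkIn_cons, ih]
    constructor
    · rintro ⟨hd, hu, t, ht, v, h₁, h₂⟩
      exact ⟨v, ⟨hd, hu, t, ht, h₁⟩, h₂⟩
    · rintro ⟨v, ⟨hd, hu, t, ht, h₁⟩, h₂⟩
      exact ⟨hd, hu, t, ht, v, h₁, h₂⟩

lemma walkIn_iff :
    Υ.WalkIn T L u v ↔ Υ.IsSteps L ∧ Υ.FromTo L u v ∧ ∀ d ∈ L, d.edge ∈ T := by
  induction L generalizing u with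
  | nil => simp [walkIn_nil, isSteps_iff, FromTo]
  | cons d L ih =>
    rw [walkIn_cons]
    simp only [ih]
    rcases L with _ | ⟨d', L⟩
    · simp only [isSteps_iff, List.not_mem_nil, IsEmpty.forall_iff, implies_true,
        List.IsChain.nil, and_self, FromTo, forall_const, ne_eq, not_true_eq_false, headSrc,
        List.head?_nil, Option.bind_none, reduceCtorEq, lastTgt, List.getLast?_nil,
        and_true, true_and, exists_eq_right, List.mem_cons, or_false, forall_eq,
        List.IsChain.singleton, List.cons_ne_self, not_false_eq_true, List.head?_cons,
        Option.bind_some, List.getLast?_singleton]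
      exact ⟨fun ⟨hT, hu, hv⟩ => ⟨Υ.exists_link_of_srcO_eq_some hu, ⟨hu, hv⟩, hT⟩,
        fun ⟨_, ⟨hu, hv⟩, hT⟩ => ⟨hT, hu, hv⟩⟩
    · simp only [isSteps_iff, FromTo, headSrc, lastTgt, List.forall_mem_cons,
        List.isChain_cons_cons]
      simp only [ne_eq, reduceCtorEq, not_false_eq_true, forall_const, IsEmpty.forall_iff,
        true_and, List.head?_cons, Option.bind_some, List.getLast?_cons_cons]
      constructor
      · rintro ⟨hT, hu, w, hw, ⟨hlinks, hchain⟩, ⟨hw', hv⟩, hT'⟩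
        exact ⟨⟨⟨Υ.exists_link_of_srcO_eq_some hu, hlinks⟩, hw.trans hw'.symm, hchain⟩,
          ⟨hu, hv⟩, hT, hT'⟩
      · rintro ⟨⟨⟨hl, hlinks⟩, hdd', hchain⟩, ⟨hu, hv⟩, hT, hT'⟩
        obtain ⟨a, b, hab⟩ := hl
        obtain ⟨w, hw⟩ := Υ.exists_tgtO_eq_some_of_link hab
        exact ⟨hT, hu, w, hw, ⟨hlinks, hchain⟩, ⟨hdd' ▸ hw, hv⟩, hT'⟩

lemma joined_of_step (hd : d.edge ∈ T) (hu : Υ.srcO d = some u) (hw : Υ.tgtO d = some w) :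
    Υ.joined T u w := by
  obtain ⟨a, b, hab⟩ := Υ.exists_link_of_srcO_eq_some hu
  simp only [srcO, tgtO, hab, Option.some.injEq] at hu hw
  cases hfwd : d.fwd <;> simp only [hfwd, Bool.false_eq_true, if_true, if_false] at hu hw <;>
    subst hu hw
  exacts [⟨d.edge, hd, Or.inr hab⟩, ⟨d.edge, hd, Or.inl hab⟩]

namespace WalkIn

variable {Υ}

lemma edge_mem (h : Υ.WalkIn T L u v) (hd : d ∈ L) : d.edge ∈ T :=
  (Υ.walkIn_iff.1 h).2.2 d hd

lemma restrict (h : Υ.WalkIn T L u v) (hS : ∀ d ∈ L, d.edge ∈ S) : Υ.WalkIn S L u v := by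
  rw [walkIn_iff] at h ⊢
  exact ⟨h.1, h.2.1, hS⟩

lemma conn (h : Υ.WalkIn T L u v) : Υ.conn T u v := by
  induction L generalizing u with
  | nil => exact h ▸ .refl
  | cons d L ih =>
    obtain ⟨hd, hu, w, hw, h⟩ := h
    exact (Υ.conn_of_joined (Υ.joined_of_step hd hu hw)).trans (ih h)

lemma conn_of_touches (h : Υ.WalkIn T L u v) (hd : d ∈ L) (hx : Υ.touches d.edge x) :
    Υ.conn T u x := by
  obtain ⟨L₁, L₂, rfl⟩ := List.append_of_mem hd
  obtain ⟨s, h₁, hd, hs, t, ht, -⟩ := Υ.walkIn_append.1 h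
  rcases (Υ.touches_iff_of_step hs ht).1 hx with rfl | rfl
  exacts [h₁.conn, h₁.conn.trans (Υ.conn_of_joined (Υ.joined_of_step hd hs ht))]

lemma reverse (h : Υ.WalkIn T L u v) : Υ.WalkIn T (revWalk L) v u := by
  induction L generalizing u with
  | nil => exact h.symm
  | cons d L ih =>
    obtain ⟨hd, hu, w, hw, h⟩ := h
    rw [revWalk_cons, walkIn_append]
    exact ⟨w, ih h, hd, (Υ.srcO_flipStep d).trans hw, u, (Υ.tgtO_flipStep d).trans hu, rfl⟩

end WalkIn

end Walks

section Circles

variable {S T : Set E} {L W : List (DStep E)} {d : DStep E} {u x y : V}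

variable {Υ} in
lemma IsCircleWalk.exists_headSrc (hW : Υ.IsCircleWalk W) : ∃ u, Υ.headSrc W = some u := by
  obtain ⟨d, W', rfl⟩ := List.exists_cons_of_ne_nil hW.1
  obtain ⟨a, b, hab⟩ := hW.2.1.1 d (by simp)
  simp [headSrc, srcO, hab]

variable {Υ} in
lemma IsCircleWalk.walkIn (hW : Υ.IsCircleWalk W) (hT : ∀ d ∈ W, d.edge ∈ T)
    (hu : Υ.headSrc W = some u) : Υ.WalkIn T W u u :=
  Υ.walkIn_iff.2 ⟨hW.2.1, ⟨fun h => (hW.1 h).elim, fun _ => ⟨hu, hW.2.2.1.trans hu⟩⟩, hT⟩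

lemma isCircleWalk_of_walkIn (h : Υ.WalkIn T L u u) (hne : L ≠ [])
    (he : (L.map DStep.edge).Nodup) (hv : (L.map Υ.srcO).Nodup) :
    Υ.IsCircleWalk L ∧ Υ.headSrc L = some u := by
  obtain ⟨hL, hft, -⟩ := Υ.walkIn_iff.1 h
  obtain ⟨hu, hu'⟩ := hft.2 hne
  exact ⟨⟨hne, hL, hu'.trans hu.symm, he, hv⟩, hu⟩

lemma not_balancedAt_of_isCircleWalk (hW : Υ.IsCircleWalk W) (hT : ∀ d ∈ W, d.edge ∈ T)
    (hs : Υ.walkSign W = -1) (hu : Υ.headSrc W = some u) (hxu : Υ.conn T x u) :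
    ¬ Υ.BalancedAt T x := fun hb => by
  simpa [hs] using hb.2 W hW hT ⟨u, hu, hxu⟩

variable {Υ} in
lemma IsCircleWalk.exists_walkIn_diff (hW : Υ.IsCircleWalk W) (hS : ∀ d ∈ W, d.edge ∈ S)
    (hd : d ∈ W) (hx : Υ.srcO d = some x) (hy : Υ.tgtO d = some y) :
    ∃ L, Υ.WalkIn (S \ {d.edge}) L y x ∧ Υ.walkSign W = Υ.sign d.edge * Υ.walkSign L := by
  obtain ⟨u, hu⟩ := hW.exists_headSrc
  have hwalk := hW.walkIn hS hu
  obtain ⟨P, Q, rfl⟩ := List.append_of_mem hd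
  obtain ⟨x', hP, -, hx', y', hy', hQ⟩ := Υ.walkIn_append.1 hwalk
  obtain rfl : x' = x := Option.some_injective _ (hx'.symm.trans hx)
  obtain rfl : y' = y := Option.some_injective _ (hy'.symm.trans hy)
  have hnd := hW.2.2.2.1
  rw [List.map_append, List.map_cons, List.nodup_middle, List.nodup_cons] at hnd
  refine ⟨Q ++ P, (Υ.walkIn_append.2 ⟨u, hQ, hP⟩).restrict fun d' hd' => ⟨?_, ?_⟩, ?_⟩
  · exact hS d' (List.mem_append.2 ((List.mem_append.1 hd').symm.imp id (List.mem_cons_of_mem d)))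
  · rintro (h : d'.edge = d.edge)
    rw [List.mem_append, or_comm, ← List.mem_append] at hd'
    exact hnd.1 (by rw [← List.map_append, ← h]; exact List.mem_map_of_mem hd')
  · simp only [walkSign_append, walkSign_cons]
    ac_rfl

lemma conn_diff_iff_of_isCircleWalk (hW : Υ.IsCircleWalk W) (hS : ∀ d ∈ W, d.edge ∈ S)
    (hd : d ∈ W) : Υ.conn (S \ {d.edge}) x y ↔ Υ.conn S x y := by
  refine Υ.conn_diff_iff fun a b hab => ?_
  obtain ⟨s, hs⟩ : ∃ s, Υ.srcO d = some s := by simp [srcO, hab]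
  obtain ⟨t, ht⟩ := Υ.exists_tgtO_eq_some_of_link hab
  obtain ⟨L, hL, -⟩ := hW.exists_walkIn_diff hS hd hs ht
  have htouch := fun z => (Υ.touches_iff_of_step (x := z) hs ht).1
  exact Υ.conn_of_eq_or_eq (Υ.conn_symm hL.conn)
    (htouch a ((Υ.touches_link hab).2 (.inl rfl))) (htouch b ((Υ.touches_link hab).2 (.inr rfl)))

end Circles

section NegativeClosedWalks

variable {T : Set E} {A B C L : List (DStep E)} {b c : DStep E} {u v : V}

lemma balancedAt_congr (h : Υ.conn T u v) : Υ.BalancedAt T u ↔ Υ.BalancedAt T v := by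
  have key : ∀ {u v}, Υ.conn T u v → Υ.BalancedAt T u → Υ.BalancedAt T v :=
    fun huv hb => ⟨fun e he w hw hvw => hb.1 e he w hw (huv.trans hvw),
      fun W hW hT ⟨w, hw, hvw⟩ => hb.2 W hW hT ⟨w, hw, huv.trans hvw⟩⟩
  exact ⟨key h, key (Υ.conn_symm h)⟩

namespace WalkIn

variable {Υ}

lemma split_of_srcO_eq (h : Υ.WalkIn T (A ++ b :: B ++ c :: C) u v)
    (hbc : Υ.srcO b = Υ.srcO c) :
    ∃ x, Υ.conn T u x ∧ Υ.WalkIn T (b :: B) x x ∧ Υ.WalkIn T (A ++ c :: C) u v := by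
  obtain ⟨y, h₁, hcC⟩ := Υ.walkIn_append.1 h
  obtain ⟨x, hA, hbB⟩ := Υ.walkIn_append.1 h₁
  obtain rfl : x = y := Option.some_injective _ (hbB.2.1.symm.trans (hbc.trans hcC.2.1))
  exact ⟨x, hA.conn, hbB, Υ.walkIn_append.2 ⟨x, hA, hcC⟩⟩

lemma split_of_flipStep (h : Υ.WalkIn T (A ++ b :: B ++ flipStep b :: C) u v) :
    ∃ y, Υ.conn T u y ∧ Υ.WalkIn T B y y ∧ Υ.WalkIn T (A ++ C) u v := by
  obtain ⟨z, h₁, -, hz, w, hw, hC⟩ := Υ.walkIn_append.1 h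
  obtain ⟨x, hA, hb, hx, y, hy, hB⟩ := Υ.walkIn_append.1 h₁
  rw [srcO_flipStep, hy, Option.some_inj] at hz
  rw [tgtO_flipStep, hx, Option.some_inj] at hw
  subst hz hw
  exact ⟨y, hA.conn.trans (Υ.conn_of_joined (Υ.joined_of_step hb hx hy)), hB,
    Υ.walkIn_append.2 ⟨x, hA, hC⟩⟩

end WalkIn

/-- A negative closed walk contains a negative circle: split it at a repeated vertex, or
cut out a repeated edge traversed back and forth, and recurse into a negative piece. -/
lemma not_balancedAt_of_walkIn (h : Υ.WalkIn T L u u) (hs : Υ.walkSign L = -1) :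
    ¬ Υ.BalancedAt T u := by
  induction hn : L.length using Nat.strong_induction_on generalizing L u with
  | _ n ih =>
  have split : ∀ L₁ L₂ x, L₁.length < n → L₂.length < n → Υ.conn T u x →
      Υ.WalkIn T L₁ x x → Υ.WalkIn T L₂ u u → Υ.walkSign L₁ * Υ.walkSign L₂ = -1 →
      ¬ Υ.BalancedAt T u := by
    intro L₁ L₂ x h₁ h₂ hx hL₁ hL₂ hs
    rcases Int.units_eq_one_or (Υ.walkSign L₁) with hs₁ | hs₁
    · rw [hs₁, one_mul] at hs
      exact ih _ h₂ hL₂ hs rfl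
    · exact fun hb => ih _ h₁ hL₁ hs₁ rfl ((Υ.balancedAt_congr hx).1 hb)
  have vertex_split : ∀ {A B C b c}, L = A ++ b :: B ++ c :: C → Υ.srcO b = Υ.srcO c →
      ¬ Υ.BalancedAt T u := by
    rintro A B C b c rfl hbc
    obtain ⟨x, hx, hbB, hAC⟩ := h.split_of_srcO_eq hbc
    refine split (b :: B) (A ++ c :: C) x (by simp at hn ⊢; omega) (by simp at hn ⊢; omega)
      hx hbB hAC ?_
    rw [← hs]
    simp only [walkSign_append, walkSign_cons]
    ac_rfl
  by_cases hv : (L.map Υ.srcO).Nodup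
  swap
  · obtain ⟨A, B, C, b, c, hL, hbc⟩ :=
      List.exists_eq_append_cons_append_cons_of_not_nodup_map _ hv
    exact vertex_split hL hbc
  by_cases he : (L.map DStep.edge).Nodup
  · have hne : L ≠ [] := by
      rintro rfl
      simp [walkSign] at hs
    obtain ⟨hc, hu⟩ := Υ.isCircleWalk_of_walkIn h hne he hv
    exact Υ.not_balancedAt_of_isCircleWalk hc (fun d hd => h.edge_mem hd) hs hu .refl
  obtain ⟨A, B, C, b, c, rfl, hbc⟩ :=
    List.exists_eq_append_cons_append_cons_of_not_nodup_map _ he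
  rcases eq_or_eq_flipStep_of_edge_eq hbc.symm with rfl | rfl
  · exact vertex_split rfl rfl
  obtain ⟨y, hy, hB, hAC⟩ := h.split_of_flipStep
  refine split B (A ++ C) y (by simp at hn ⊢; omega) (by simp at hn ⊢; omega) hy hB hAC ?_
  rw [← hs]
  simp only [walkSign_append, walkSign_cons, flipStep]
  rw [← one_mul (Υ.walkSign B * _), ← Int.units_mul_self (Υ.sign b.edge)]
  ac_rfl

end NegativeClosedWalks

section Deletion

variable {S : Set E} {f : E} {Z N : List (DStep E)} {d₀ d₁ : DStep E} {v w x : V}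

def balComps (T : Set E) : Set (Set V) :=
  {X | ∃ v, X = Υ.comp T v ∧ Υ.BalancedAt T v}

lemma bBal_eq_ncard (T : Set E) : Υ.bBal T = (Υ.balComps T).ncard :=
  Nat.card_coe_set_eq _

lemma bBal_diff_le [Finite V] (hiff : ∀ x y, Υ.conn (S \ {f}) x y ↔ Υ.conn S x y)
    (hbal : ∀ v, Υ.BalancedAt (S \ {f}) v → Υ.BalancedAt S v) :
    Υ.bBal (S \ {f}) ≤ Υ.bBal S := by
  rw [bBal_eq_ncard, bBal_eq_ncard]
  refine Set.ncard_le_ncard ?_ (Set.toFinite _)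
  rintro X ⟨v, rfl, hb⟩
  exact ⟨v, Set.ext fun w => hiff v w, hbal v hb⟩

lemma balancedAt_of_balancedAt_diff (hiff : ∀ y, Υ.conn (S \ {f}) v y ↔ Υ.conn S v y)
    (hhalf : ∀ u, Υ.shape f = .half u → ¬ Υ.conn S v u)
    (hcirc : ∀ N, Υ.IsCircleWalk N → (∀ d ∈ N, d.edge ∈ S) → (∃ d ∈ N, d.edge = f) →
      (∃ u, Υ.headSrc N = some u ∧ Υ.conn S v u) → Υ.walkSign N = 1)
    (hb : Υ.BalancedAt (S \ {f}) v) : Υ.BalancedAt S v := by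
  refine ⟨fun e he u hu hvu => ?_, fun N hN hS ⟨u, hu, hvu⟩ => ?_⟩
  · by_cases hef : e = f
    · exact hhalf u (hef ▸ hu) hvu
    · exact hb.1 e ⟨he, hef⟩ u hu ((hiff u).2 hvu)
  · by_cases hf : ∃ d ∈ N, d.edge = f
    · exact hcirc N hN hS hf ⟨u, hu, hvu⟩
    · push Not at hf
      exact hb.2 N hN (fun d hd => ⟨hS d hd, hf d hd⟩) ⟨u, hu, (hiff u).2 hvu⟩

lemma balancedAt_of_balancedAt_diff_of_not_conn
    (hiff : ∀ y, Υ.conn (S \ {f}) v y ↔ Υ.conn S v y)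
    (hv : ∀ w, Υ.touches f w → ¬ Υ.conn S v w) (hb : Υ.BalancedAt (S \ {f}) v) :
    Υ.BalancedAt S v := by
  refine Υ.balancedAt_of_balancedAt_diff hiff (fun u hu => hv u (by simp [touches, hu]))
    (fun N hN hS ⟨d, hd, hdf⟩ ⟨u, hu, hvu⟩ => ?_) hb
  obtain ⟨a, b, hab⟩ := hN.2.1.1 d hd
  have ha : Υ.touches d.edge a := (Υ.touches_link hab).2 (.inl rfl)
  exact (hv a (hdf ▸ ha) (hvu.trans ((hN.walkIn hS hu).conn_of_touches hd ha))).elim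

lemma balancedAt_of_balancedAt_diff_of_not_balancedAt
    (hiff : ∀ x y, Υ.conn (S \ {f}) x y ↔ Υ.conn S x y) (hf : f ∈ S) (hw : Υ.touches f w)
    (hnb : ¬ Υ.BalancedAt (S \ {f}) w) (hb : Υ.BalancedAt (S \ {f}) v) :
    Υ.BalancedAt S v :=
  Υ.balancedAt_of_balancedAt_diff_of_not_conn (hiff v) (fun _ hx hvx => hnb
    ((Υ.balancedAt_congr ((hiff v w).2 (hvx.trans (Υ.conn_of_touches hf hx hw)))).1 hb)) hb

lemma bBal_diff_le_of_not_balancedAt [Finite V]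
    (hiff : ∀ x y, Υ.conn (S \ {f}) x y ↔ Υ.conn S x y) (hf : f ∈ S) (hw : Υ.touches f w)
    (hnb : ¬ Υ.BalancedAt (S \ {f}) w) : Υ.bBal (S \ {f}) ≤ Υ.bBal S :=
  Υ.bBal_diff_le hiff fun _ => Υ.balancedAt_of_balancedAt_diff_of_not_balancedAt hiff hf hw hnb

/-- The two walks left by deleting a common edge from a positive and a negative circle
close up into a negative closed walk. -/
lemma not_balancedAt_diff_of_isCircleWalk (hZ : Υ.IsCircleWalk Z) (hN : Υ.IsCircleWalk N)
    (hZS : ∀ d ∈ Z, d.edge ∈ S) (hNS : ∀ d ∈ N, d.edge ∈ S)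
    (hsZ : Υ.walkSign Z = 1) (hsN : Υ.walkSign N = -1)
    (hd₀ : d₀ ∈ Z) (hd₁ : d₁ ∈ N) (hd : d₁.edge = d₀.edge) (hx : Υ.srcO d₀ = some x) :
    ¬ Υ.BalancedAt (S \ {d₀.edge}) x := by
  obtain ⟨a, b, hab⟩ := Υ.exists_link_of_srcO_eq_some hx
  obtain ⟨y, hy⟩ := Υ.exists_tgtO_eq_some_of_link hab
  obtain ⟨L₀, hL₀, hσ₀⟩ := hZ.exists_walkIn_diff hZS hd₀ hx hy
  obtain ⟨L₁, L, hL, hσ₁, hσL⟩ : ∃ L₁ L, Υ.WalkIn (S \ {d₀.edge}) L x x ∧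
      Υ.walkSign N = Υ.sign d₀.edge * Υ.walkSign L₁ ∧
      Υ.walkSign L = Υ.walkSign L₀ * Υ.walkSign L₁ := by
    rcases eq_or_eq_flipStep_of_edge_eq hd with rfl | rfl
    · obtain ⟨L₁, hL₁, hσ₁⟩ := hN.exists_walkIn_diff hNS hd₁ hx hy
      exact ⟨L₁, revWalk L₀ ++ L₁, Υ.walkIn_append.2 ⟨y, hL₀.reverse, hL₁⟩, hσ₁,
        by rw [walkSign_append, walkSign_revWalk]⟩
    · obtain ⟨L₁, hL₁, hσ₁⟩ := hN.exists_walkIn_diff hNS hd₁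
        ((Υ.srcO_flipStep d₀).trans hy) ((Υ.tgtO_flipStep d₀).trans hx)
      exact ⟨L₁, L₁ ++ L₀, Υ.walkIn_append.2 ⟨y, hL₁, hL₀⟩, hσ₁,
        by rw [walkSign_append, mul_comm]⟩
  refine Υ.not_balancedAt_of_walkIn hL ?_
  calc Υ.walkSign L
      = (Υ.sign d₀.edge * Υ.walkSign L₀) * (Υ.sign d₀.edge * Υ.walkSign L₁) := by
        rw [hσL, mul_mul_mul_comm, Int.units_mul_self, one_mul]
    _ = -1 := by rw [← hσ₀, ← hσ₁, hsZ, hsN, one_mul]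

lemma balancedAt_of_balancedAt_diff_of_isCircleWalk (hZ : Υ.IsCircleWalk Z)
    (hZS : ∀ d ∈ Z, d.edge ∈ S) (hsZ : Υ.walkSign Z = 1) (hd₀ : d₀ ∈ Z)
    (hb : Υ.BalancedAt (S \ {d₀.edge}) v) : Υ.BalancedAt S v := by
  have hiff := fun x y => Υ.conn_diff_iff_of_isCircleWalk (x := x) (y := y) hZ hZS hd₀
  obtain ⟨a, b, hab⟩ := hZ.2.1.1 d₀ hd₀
  obtain ⟨x, hx⟩ : ∃ x, Υ.srcO d₀ = some x := by simp [srcO, hab]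
  by_cases hxb : Υ.BalancedAt (S \ {d₀.edge}) x
  · refine Υ.balancedAt_of_balancedAt_diff (hiff v) (fun u hu => by simp [hab] at hu)
      (fun N hN hNS ⟨d₁, hd₁, hd⟩ _ => ?_) hb
    by_contra hsN
    exact Υ.not_balancedAt_diff_of_isCircleWalk hZ hN hZS hNS hsZ
      ((Int.units_eq_one_or _).resolve_left hsN) hd₀ hd₁ hd hx hxb
  · exact Υ.balancedAt_of_balancedAt_diff_of_not_balancedAt hiff (hZS d₀ hd₀)
      (Υ.touches_of_srcO_eq_some hx) hxb hb

end Deletion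

section SignCircuits

variable {S : Set E} {f : E} {W₁ W₂ L : List (DStep E)} {U : UWalk V E} {d₀ : DStep E}
  {u v x : V}

lemma edge_ne_of_isSteps (hL : Υ.IsSteps L) {d : DStep E} (hd : d ∈ L)
    (hf : ∀ a b, Υ.shape f ≠ .link a b) : d.edge ≠ f := by
  rintro rfl
  obtain ⟨a, b, hab⟩ := hL.1 d hd
  exact hf a b hab

lemma steps_edge_mem_uedges {d : DStep E} (hd : d ∈ U.steps) : d.edge ∈ uedges U :=
  .inr (.inl (List.mem_map_of_mem hd))

lemma bBal_diff_le_of_isPosCircleWalk [Finite V] (hU : Υ.IsPosCircleWalk U)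
    (hS : uedges U ⊆ S) : ∃ f ∈ uedges U, Υ.bBal (S \ {f}) ≤ Υ.bBal S := by
  obtain ⟨-, -, hZ, hsZ, -, -⟩ := hU
  have hZS : ∀ d ∈ U.steps, d.edge ∈ S := fun d hd => hS (steps_edge_mem_uedges hd)
  obtain ⟨d₀, hd₀⟩ := List.exists_mem_of_ne_nil _ hZ.1
  exact ⟨d₀.edge, steps_edge_mem_uedges hd₀,
    Υ.bBal_diff_le (fun x y => Υ.conn_diff_iff_of_isCircleWalk hZ hZS hd₀) fun _ =>
      Υ.balancedAt_of_balancedAt_diff_of_isCircleWalk hZ hZS hsZ hd₀⟩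

lemma bBal_diff_le_of_isCircleWalk_of_conn_neg [Finite V] (hW₁ : Υ.IsCircleWalk W₁)
    (hW₁S : ∀ d ∈ W₁, d.edge ∈ S) (hd₀ : d₀ ∈ W₁) (hx : Υ.srcO d₀ = some x)
    (hW₂ : Υ.IsCircleWalk W₂) (hW₂S : ∀ d ∈ W₂, d.edge ∈ S \ {d₀.edge})
    (hs₂ : Υ.walkSign W₂ = -1) (hu : Υ.headSrc W₂ = some u) (hxu : Υ.conn S x u) :
    Υ.bBal (S \ {d₀.edge}) ≤ Υ.bBal S :=
  have hiff := fun x y => Υ.conn_diff_iff_of_isCircleWalk (x := x) (y := y) hW₁ hW₁S hd₀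
  Υ.bBal_diff_le_of_not_balancedAt hiff (hW₁S d₀ hd₀) (Υ.touches_of_srcO_eq_some hx)
    (Υ.not_balancedAt_of_isCircleWalk hW₂ hW₂S hs₂ hu ((hiff x u).2 hxu))

lemma bBal_diff_le_of_half [Finite V] (hf : Υ.shape f = .half v) (hfS : f ∈ S)
    (hnb : ¬ Υ.BalancedAt (S \ {f}) v) : Υ.bBal (S \ {f}) ≤ Υ.bBal S :=
  Υ.bBal_diff_le_of_not_balancedAt (fun _ _ => Υ.conn_diff_iff_of_not_link (by simp [hf]))
    hfS (by simp [touches, hf]) hnb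

lemma bBal_diff_le_of_isHandcuffWalk [Finite V] (hU : Υ.IsHandcuffWalk (-1) (-1) U)
    (hS : uedges U ⊆ S) : ∃ f ∈ uedges U, Υ.bBal (S \ {f}) ≤ Υ.bBal S := by
  have hUS : ∀ d ∈ U.steps, d.edge ∈ S := fun d hd => hS (steps_edge_mem_uedges hd)
  rcases hU with
    ⟨W₁, P, W₂, u₁, u₂, -, -, hU, -, hW₁, -, hu₁, hW₂, hs₂, hu₂, hP, hftP, -, -, -, -, hnd⟩ |
    ⟨e₁, P, W₂, u₂, he₁, -, hshe₁, -, -, hU, -, hW₂, hs₂, hu₂, hP, hftP, -, -, -⟩ |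
    ⟨e₁, e₂, he₁, he₂, hne, hshe₁, hshe₂, -, -, hP, hftP⟩
  · rw [hU] at hUS
    obtain ⟨d₀, hd₀⟩ := List.exists_mem_of_ne_nil _ hW₁.1
    obtain ⟨a, b, hab⟩ := hW₁.2.1.1 d₀ hd₀
    obtain ⟨x, hx⟩ : ∃ x, Υ.srcO d₀ = some x := by simp [srcO, hab]
    have hW₁S : ∀ d ∈ W₁, d.edge ∈ S := fun d hd => hUS d (by simp [hd])
    rw [List.map_append] at hnd
    have hW₂S : ∀ d ∈ W₂, d.edge ∈ S \ {d₀.edge} := fun d hd =>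
      ⟨hUS d (by simp [hd]), fun h => List.disjoint_of_nodup_append hnd
        (List.mem_map_of_mem (List.mem_append_left P hd₀)) (h ▸ List.mem_map_of_mem hd)⟩
    have hPS : Υ.WalkIn S P u₁ u₂ :=
      Υ.walkIn_iff.2 ⟨hP.1, hftP, fun d hd => hUS d (by simp [hd])⟩
    refine ⟨d₀.edge, steps_edge_mem_uedges (by rw [hU]; simp [hd₀]),
      Υ.bBal_diff_le_of_isCircleWalk_of_conn_neg hW₁ hW₁S hd₀ hx hW₂ hW₂S hs₂ hu₂ ?_⟩
    exact (Υ.conn_symm ((hW₁.walkIn hW₁S hu₁).conn_of_touches hd₀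
      (Υ.touches_of_srcO_eq_some hx))).trans hPS.conn
  · rw [hU] at hUS
    have hnl : ∀ a b, Υ.shape e₁ ≠ .link a b := by simp [hshe₁]
    have hW₂S : ∀ d ∈ W₂, d.edge ∈ S \ {e₁} := fun d hd =>
      ⟨hUS d (by simp [hd]), Υ.edge_ne_of_isSteps hW₂.2.1 hd hnl⟩
    have hPS : Υ.WalkIn (S \ {e₁}) P U.startV u₂ := Υ.walkIn_iff.2
      ⟨hP.1, hftP, fun d hd => ⟨hUS d (by simp [hd]), Υ.edge_ne_of_isSteps hP.1 hd hnl⟩⟩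
    exact ⟨e₁, .inl he₁, Υ.bBal_diff_le_of_half hshe₁ (hS (.inl he₁))
      (Υ.not_balancedAt_of_isCircleWalk hW₂ hW₂S hs₂ hu₂ hPS.conn)⟩
  · have hnl : ∀ a b, Υ.shape e₁ ≠ .link a b := by simp [hshe₁]
    have hPS : Υ.WalkIn (S \ {e₁}) U.steps U.startV U.endV := Υ.walkIn_iff.2
      ⟨hP.1, hftP, fun d hd => ⟨hUS d hd, Υ.edge_ne_of_isSteps hP.1 hd hnl⟩⟩
    exact ⟨e₁, .inl he₁, Υ.bBal_diff_le_of_half hshe₁ (hS (.inl he₁))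
      fun hb => hb.1 e₂ ⟨hS (.inr (.inr he₂)), hne.symm⟩ _ hshe₂ hPS.conn⟩

lemma exists_mem_bBal_diff_le_of_signCircuit [Finite V] {D : Set E} (hDS : D ⊆ S)
    (hD : Υ.SignCircuit D) : ∃ f ∈ D, Υ.bBal (S \ {f}) ≤ Υ.bBal S := by
  rcases hD with ⟨e, he, rfl⟩ | ⟨U, hU | hU, rfl⟩
  · have hiff := fun x y =>
      Υ.conn_diff_iff_of_not_link (S := S) (f := e) (x := x) (y := y) (by simp [he])
    exact ⟨e, rfl, Υ.bBal_diff_le hiff fun v =>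
      Υ.balancedAt_of_balancedAt_diff_of_not_conn (hiff v) (by simp [touches, he])⟩
  · exact Υ.bBal_diff_le_of_isPosCircleWalk hU hDS
  · exact Υ.bBal_diff_le_of_isHandcuffWalk hU hDS

end SignCircuits

section RankBound

variable {T : Set E} {e : E} {v a b : V} {X : Set V}

lemma conn_insert_iff_of_not_conn (hv : ∀ w, Υ.touches e w → ¬ Υ.conn T v w) {y : V} :
    Υ.conn (insert e T) v y ↔ Υ.conn T v y :=
  ⟨fun h => (Υ.conn_insert_imp h).resolve_right fun ⟨w, hw, hvw⟩ => hv w hw hvw,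
    Υ.conn_mono (Set.subset_insert _ _)⟩

lemma balancedAt_insert_of_not_conn (he : e ∉ T) (hv : ∀ w, Υ.touches e w → ¬ Υ.conn T v w)
    (hb : Υ.BalancedAt T v) : Υ.BalancedAt (insert e T) v := by
  have hiff : ∀ y, Υ.conn (insert e T \ {e}) v y ↔ Υ.conn (insert e T) v y := by
    rw [Set.insert_sdiff_self_of_notMem he]
    exact fun y => (Υ.conn_insert_iff_of_not_conn hv).symm
  refine Υ.balancedAt_of_balancedAt_diff_of_not_conn hiff (fun w hw hvw => hv w hw ?_) ?_
  · exact (Υ.conn_insert_iff_of_not_conn hv).1 hvw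
  · rwa [Set.insert_sdiff_self_of_notMem he]

lemma comp_mem_balComps_insert (he : e ∉ T) (hv : ∀ w, Υ.touches e w → ¬ Υ.conn T v w)
    (hb : Υ.BalancedAt T v) : Υ.comp T v ∈ Υ.balComps (insert e T) :=
  ⟨v, Set.ext fun _ => (Υ.conn_insert_iff_of_not_conn hv).symm,
    Υ.balancedAt_insert_of_not_conn he hv hb⟩

lemma balancedAt_of_comp_mem_balComps (h : Υ.comp T v ∈ Υ.balComps T) : Υ.BalancedAt T v := by
  obtain ⟨w, hvw, hb⟩ := h
  have hwv : v ∈ Υ.comp T w := hvw ▸ Υ.conn_refl T v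
  exact (Υ.balancedAt_congr hwv).1 hb

/-- A circle through the new link would already connect its ends in `T`. -/
lemma balancedAt_insert_of_link (hab : Υ.shape e = .link a b) (hnab : ¬ Υ.conn T a b)
    (ha : Υ.BalancedAt T a) (hb : Υ.BalancedAt T b) : Υ.BalancedAt (insert e T) a := by
  have hsplit : ∀ u, Υ.conn (insert e T) a u → Υ.conn T a u ∨ Υ.conn T b u := fun u h => by
    rcases Υ.conn_insert_imp (Υ.conn_symm h) with h | ⟨w, hw, huw⟩
    · exact .inl (Υ.conn_symm h)
    · rcases (Υ.touches_link hab).1 hw with rfl | rfl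
      exacts [.inl (Υ.conn_symm huw), .inr (Υ.conn_symm huw)]
  refine ⟨fun h hh u hu hau => ?_, fun N hN hS ⟨u, hu, hau⟩ => ?_⟩
  · rcases hh with rfl | hh
    · simp [hab] at hu
    · rcases hsplit u hau with hau | hbu
      exacts [ha.1 h hh u hu hau, hb.1 h hh u hu hbu]
  by_cases heN : ∃ d ∈ N, d.edge = e
  · obtain ⟨d, hd, rfl⟩ := heN
    obtain ⟨x, hx⟩ : ∃ x, Υ.srcO d = some x := by simp [srcO, hab]
    obtain ⟨y, hy⟩ := Υ.exists_tgtO_eq_some_of_link hab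
    obtain ⟨L, hL, -⟩ := hN.exists_walkIn_diff hS hd hx hy
    have hyx := Υ.conn_mono (Set.sdiff_singleton_subset_iff.2 subset_rfl) hL.conn
    have hends := fun z hz => (Υ.touches_iff_of_step (x := z) hx hy).1 ((Υ.touches_link hab).2 hz)
    exact (hnab (Υ.conn_of_eq_or_eq (Υ.conn_symm hyx) (hends a (.inl rfl))
      (hends b (.inr rfl)))).elim
  · push Not at heN
    have hT : ∀ d ∈ N, d.edge ∈ T := fun d hd => (hS d hd).resolve_left (heN d hd)
    rcases hsplit u hau with hau | hbu
    exacts [ha.2 N hN hT ⟨u, hu, hau⟩, hb.2 N hN hT ⟨u, hu, hbu⟩]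

lemma bBal_le_bBal_insert_add_one_of_touched_eq [Finite V] (he : e ∉ T)
    (hz : ∀ w, Υ.touches e w → Υ.comp T w ∈ Υ.balComps T → Υ.comp T w = X) :
    Υ.bBal T ≤ Υ.bBal (insert e T) + 1 := by
  rw [bBal_eq_ncard, bBal_eq_ncard]
  have hsub : Υ.balComps T ⊆ Υ.balComps (insert e T) ∪ {X} := by
    rintro _ ⟨v, rfl, hb⟩
    by_cases hv : ∃ w, Υ.touches e w ∧ Υ.conn T v w
    · obtain ⟨w, hw, hvw⟩ := hv
      exact .inr ((Υ.comp_eq_of_conn hvw).trans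
        (hz w hw ⟨v, (Υ.comp_eq_of_conn hvw).symm, hb⟩))
    · push Not at hv
      exact .inl (Υ.comp_mem_balComps_insert he hv hb)
  calc _ ≤ (Υ.balComps (insert e T) ∪ {X}).ncard := Set.ncard_le_ncard hsub (Set.toFinite _)
    _ ≤ _ := (Set.ncard_union_le _ _).trans (by rw [Set.ncard_singleton])

lemma bBal_le_bBal_insert_add_one_of_link [Finite V] (he : e ∉ T)
    (hab : Υ.shape e = .link a b) (hnab : ¬ Υ.conn T a b) (ha : Υ.BalancedAt T a)
    (hb : Υ.BalancedAt T b) : Υ.bBal T ≤ Υ.bBal (insert e T) + 1 := by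
  rw [bBal_eq_ncard, bBal_eq_ncard]
  set M := Υ.comp (insert e T) a
  have hM : M ∈ Υ.balComps (insert e T) := ⟨a, rfl, Υ.balancedAt_insert_of_link hab hnab ha hb⟩
  have hsub : Υ.balComps T ⊆
      (Υ.balComps (insert e T) \ {M}) ∪ {Υ.comp T a, Υ.comp T b} := by
    rintro _ ⟨v, rfl, hbv⟩
    by_cases hv : ∃ w, Υ.touches e w ∧ Υ.conn T v w
    · obtain ⟨w, hw, hvw⟩ := hv
      rw [Υ.comp_eq_of_conn hvw]
      rcases (Υ.touches_link hab).1 hw with rfl | rfl <;> simp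
    · push Not at hv
      refine .inl ⟨Υ.comp_mem_balComps_insert he hv hbv, fun hvM => ?_⟩
      have hva : a ∈ Υ.comp T v := by rw [Set.mem_singleton_iff.1 hvM]; exact Υ.conn_refl _ a
      exact hv a ((Υ.touches_link hab).2 (.inl rfl)) hva
  have h₁ := Set.ncard_le_ncard hsub (Set.toFinite _)
  have h₂ := Set.ncard_union_le (Υ.balComps (insert e T) \ {M}) {Υ.comp T a, Υ.comp T b}
  have h₃ := Set.ncard_insert_le (Υ.comp T a) {Υ.comp T b}
  have h₄ := Set.ncard_sdiff_singleton_add_one hM (Set.toFinite _)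
  rw [Set.ncard_singleton] at h₃
  omega

lemma bBal_le_bBal_insert_add_one [Finite V] (he : e ∉ T) :
    Υ.bBal T ≤ Υ.bBal (insert e T) + 1 := by
  cases hsh : Υ.shape e with
  | loose =>
    exact Υ.bBal_le_bBal_insert_add_one_of_touched_eq (X := ∅) he fun w hw =>
      by simp [touches, hsh] at hw
  | half u =>
    refine Υ.bBal_le_bBal_insert_add_one_of_touched_eq (X := Υ.comp T u) he fun w hw _ => ?_
    simp only [touches, hsh] at hw
    rw [hw]
  | link a b =>
    have hends := fun w => (Υ.touches_link (x := w) hsh).1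
    by_cases hnab : Υ.conn T a b
    · refine Υ.bBal_le_bBal_insert_add_one_of_touched_eq (X := Υ.comp T a) he fun w hw _ => ?_
      rcases hends w hw with rfl | rfl
      exacts [rfl, (Υ.comp_eq_of_conn hnab).symm]
    by_cases ha : Υ.BalancedAt T a
    · by_cases hb : Υ.BalancedAt T b
      · exact Υ.bBal_le_bBal_insert_add_one_of_link he hsh hnab ha hb
      refine Υ.bBal_le_bBal_insert_add_one_of_touched_eq (X := Υ.comp T a) he fun w hw hw' => ?_
      rcases hends w hw with rfl | rfl
      exacts [rfl, (hb (Υ.balancedAt_of_comp_mem_balComps hw')).elim]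
    refine Υ.bBal_le_bBal_insert_add_one_of_touched_eq (X := Υ.comp T b) he fun w hw hw' => ?_
    rcases hends w hw with rfl | rfl
    exacts [(ha (Υ.balancedAt_of_comp_mem_balComps hw')).elim, rfl]

lemma card_le_bBal_empty [Fintype V] : Fintype.card V ≤ Υ.bBal ∅ := by
  have hconn : ∀ v w, Υ.conn ∅ v w → w = v := fun v w =>
    (Relation.reflTransGen_iff_eq fun _ ⟨_, he, _⟩ => he).1
  have hbal : ∀ v, Υ.BalancedAt ∅ v := fun v => ⟨fun _ he => he.elim, fun N hN hS _ => by
    obtain ⟨d, hd⟩ := List.exists_mem_of_ne_nil _ hN.1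
    exact (hS d hd).elim⟩
  rw [← Nat.card_eq_fintype_card]
  refine Nat.card_le_card_of_injective (fun v => ⟨Υ.comp ∅ v, v, rfl, hbal v⟩) fun v w h => ?_
  have hvw : Υ.comp ∅ v = Υ.comp ∅ w := congrArg Subtype.val h
  have hw : w ∈ Υ.comp ∅ v := hvw ▸ Υ.conn_refl ∅ w
  exact (hconn v w hw).symm

theorem card_le_ncard_add_bBal [Fintype V] [Finite E] (T : Set E) :
    Fintype.card V ≤ T.ncard + Υ.bBal T := by
  induction T, T.toFinite using Set.Finite.induction_on with
  | empty => simpa using Υ.card_le_bBal_empty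
  | @insert e T he hT ih =>
    rw [Set.ncard_insert_of_notMem he hT]
    have := Υ.bBal_le_bBal_insert_add_one he
    omega

end RankBound

section EdgeComponents

variable {S C C₁ C₂ : Set E} {e f g : E}

lemma econn_symm (h : Υ.econn S e f) : Υ.econn S f e := by
  obtain ⟨he, hf, rfl | ⟨v, w, hv, hw, hvw⟩⟩ := h
  exacts [⟨he, he, .inl rfl⟩, ⟨hf, he, .inr ⟨w, v, hw, hv, Υ.conn_symm hvw⟩⟩]

lemma econn_trans (h₁ : Υ.econn S e f) (h₂ : Υ.econn S f g) : Υ.econn S e g := by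
  obtain ⟨he, hf, rfl | ⟨v, w, hv, hw, hvw⟩⟩ := h₁
  · exact h₂
  obtain ⟨-, hg, rfl | ⟨v', w', hv', hw', hvw'⟩⟩ := h₂
  · exact ⟨he, hf, .inr ⟨v, w, hv, hw, hvw⟩⟩
  · exact ⟨he, hg, .inr ⟨v, w', hv, hw', (hvw.trans (Υ.conn_of_touches hf hw hv')).trans hvw'⟩⟩

namespace EdgeComponent

variable {Υ}

lemma subset (hC : Υ.EdgeComponent S C) : C ⊆ S := by
  obtain ⟨e, -, rfl⟩ := hC
  exact fun f hf => hf.2.1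

lemma eq_of_mem (hC₁ : Υ.EdgeComponent S C₁) (hC₂ : Υ.EdgeComponent S C₂)
    (hg₁ : g ∈ C₁) (hg₂ : g ∈ C₂) : C₁ = C₂ := by
  obtain ⟨e₁, -, rfl⟩ := hC₁
  obtain ⟨e₂, -, rfl⟩ := hC₂
  ext f
  exact ⟨fun hf => Υ.econn_trans (Υ.econn_trans hg₂ (Υ.econn_symm hg₁)) hf,
    fun hf => Υ.econn_trans (Υ.econn_trans hg₁ (Υ.econn_symm hg₂)) hf⟩

end EdgeComponent

end EdgeComponents

lemma exists_signCircuit_of_not_hyperbalanced {C : Set E} (hC : ¬ Υ.Hyperbalanced C) :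
    ∃ D ⊆ C, Υ.SignCircuit D := by
  simp only [Hyperbalanced, not_forall] at hC
  obtain ⟨D, hDC, hD, -⟩ := hC
  exact ⟨D, hDC, hD⟩

lemma delta_le_one (S : Set E) : Υ.delta S ≤ 1 := by
  unfold delta
  split <;> omega

lemma rk_lt_ncard_of_bBal_diff_diff_le [Fintype V] [Finite E] {S : Set E} {f₁ f₂ : E}
    (hf₁ : f₁ ∈ S) (hf₂ : f₂ ∈ S \ {f₁}) (hb : Υ.bBal ((S \ {f₁}) \ {f₂}) ≤ Υ.bBal S) :
    Υ.rk S < S.ncard := by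
  have hbound := Υ.card_le_ncard_add_bBal ((S \ {f₁}) \ {f₂})
  have hcard := Set.ncard_sdiff_singleton_add_one hf₂ (Set.toFinite _)
  have hcard' := Set.ncard_sdiff_singleton_add_one hf₁ (Set.toFinite _)
  have hδ := Υ.delta_le_one S
  unfold rk
  omega

end GSGraph

theorem two_hyperfrustrated_components_dependent_general
    {V E G : Type*} [AddCommGroup G] [Fintype V] [Fintype E]
    (Υ : GSGraph V E G) (S : Set E)
    (h : ∃ C₁ C₂ : Set E, Υ.EdgeComponent S C₁ ∧ Υ.EdgeComponent S C₂ ∧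
      C₁ ≠ C₂ ∧ ¬ Υ.Hyperbalanced C₁ ∧ ¬ Υ.Hyperbalanced C₂) :
    Υ.rk S < S.ncard := by
  obtain ⟨C₁, C₂, hC₁, hC₂, hne, hH₁, hH₂⟩ := h
  obtain ⟨D₁, hD₁C₁, hD₁⟩ := Υ.exists_signCircuit_of_not_hyperbalanced hH₁
  obtain ⟨D₂, hD₂C₂, hD₂⟩ := Υ.exists_signCircuit_of_not_hyperbalanced hH₂
  obtain ⟨f₁, hf₁, hb₁⟩ := Υ.exists_mem_bBal_diff_le_of_signCircuit (hD₁C₁.trans hC₁.subset) hD₁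
  have hD₂S : D₂ ⊆ S \ {f₁} := fun g hg => ⟨hC₂.subset (hD₂C₂ hg), fun (hgf : g = f₁) =>
    hne (hC₁.eq_of_mem hC₂ (hD₁C₁ hf₁) (hgf ▸ hD₂C₂ hg))⟩
  obtain ⟨f₂, hf₂, hb₂⟩ := Υ.exists_mem_bBal_diff_le_of_signCircuit hD₂S hD₂
  exact Υ.rk_lt_ncard_of_bBal_diff_diff_le (hC₁.subset (hD₁C₁ hf₁)) (hD₂S hf₂) (hb₂.trans hb₁)

/-- An edge set containing two distinct hyperfrustrated edge
components is dependent in `M(Υ)` (its rank is less than its cardinality). -/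
theorem two_hyperfrustrated_components_dependent
    {V E G : Type*} [AddCommGroup G] [Fintype V] [Fintype E]
    (Υ : GSGraph V E G) (hΥ : Υ.Proper) (S : Set E)
    (h : ∃ C₁ C₂ : Set E, Υ.EdgeComponent S C₁ ∧ Υ.EdgeComponent S C₂ ∧
      C₁ ≠ C₂ ∧ ¬ Υ.Hyperbalanced C₁ ∧ ¬ Υ.Hyperbalanced C₂) :
    Υ.rk S < S.ncard :=
  two_hyperfrustrated_components_dependent_general Υ S h

end GSG
end

section
/- Let Γ be a finite connected simple graph on n vertices with at least one edge, and for each edge v_iv_j let its edge point be e_i + e_j ∈ ℝⁿ. Then the affine dimension of the set of edge points (i.e., the dimension of their affine hull) is n − 2 if Γ is bipartite and n − 1 if Γ is not bipartite. -/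
/-- The edge point of an edge `{i,j}`: the vector `e_i + e_j ∈ ℝ^V`. -/
noncomputable def edgePoint {V : Type*} [DecidableEq V] (s : Sym2 V) : V → ℝ :=
  fun u => by classical exact if u ∈ s then 1 else 0

namespace EdgePolyAux

open Module Submodule

variable {V : Type*} [Fintype V] [DecidableEq V]

/-- weight functional `x ↦ ∑ v, w v * x v`. -/
noncomputable def wF (w : V → ℝ) : (V → ℝ) →ₗ[ℝ] ℝ where
  toFun x := ∑ v, w v * x v
  map_add' x y := by simp [mul_add, Finset.sum_add_distrib]
  map_smul' c x := by simp [Finset.mul_sum, mul_left_comm]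

lemma wF_single (w : V → ℝ) (u : V) : wF w (Pi.single u 1) = w u := by
  simp [wF, Pi.single_apply, mul_ite]

lemma edgePoint_eq {i j : V} (h : i ≠ j) :
    edgePoint s(i, j) = (Pi.single i 1 + Pi.single j 1 : V → ℝ) := by
  funext u
  simp only [edgePoint, Sym2.mem_iff, Pi.add_apply, Pi.single_apply]
  by_cases h1 : u = i <;> by_cases h2 : u = j <;> simp_all <;> norm_num

lemma single_decomp (x : V → ℝ) : x = ∑ v, x v • (Pi.single v 1 : V → ℝ) := by
  funext u
  simp [Finset.sum_apply, Pi.single_apply, mul_ite]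

lemma walk_mem (Γ : SimpleGraph V) (W : Submodule ℝ (V → ℝ))
    (hW : ∀ {i j : V}, Γ.Adj i j → (Pi.single i 1 + Pi.single j 1 : V → ℝ) ∈ W)
    {u v : V} (p : Γ.Walk u v) :
    (Pi.single u 1 : V → ℝ) - ((-1 : ℝ) ^ p.length) • (Pi.single v 1 : V → ℝ) ∈ W := by
  induction p with
  | nil => simp
  | @cons u w v h q ih =>
    have key : (Pi.single u 1 : V → ℝ) - ((-1 : ℝ) ^ (SimpleGraph.Walk.cons h q).length) • (Pi.single v 1 : V → ℝ)
        = (Pi.single u 1 + Pi.single w 1) -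
          ((Pi.single w 1 : V → ℝ) - ((-1 : ℝ) ^ q.length) • (Pi.single v 1 : V → ℝ)) := by
      rw [SimpleGraph.Walk.length_cons, pow_succ]
      module
    rw [key]
    exact W.sub_mem (hW h) ih

lemma walk_zero (Γ : SimpleGraph V) (f : (V → ℝ) →ₗ[ℝ] ℝ)
    (hfadj : ∀ {i j : V}, Γ.Adj i j → f (Pi.single i 1) = - f (Pi.single j 1))
    {u v : V} (p : Γ.Walk u v) (h0 : f (Pi.single u 1) = 0) : f (Pi.single v 1) = 0 := by
  induction p with
  | nil => exact h0
  | @cons u w v h q ih => exact ih (by rw [← neg_eq_zero, ← hfadj h, h0])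

end EdgePolyAux

open Classical in
/-- Ohsugi–Hibi: for a finite connected simple graph `Γ` on `n`
vertices with at least one edge, the dimension of the affine hull of its edge
points `e_i + e_j` is `n − 2` if `Γ` is bipartite and `n − 1` otherwise. -/
theorem edge_polytope_dimension
    {V : Type*} [Fintype V] [DecidableEq V]
    (Γ : SimpleGraph V) (hconn : Γ.Connected) (hne : Γ.edgeSet.Nonempty) :
    Module.finrank ℝ (affineSpan ℝ (edgePoint '' Γ.edgeSet)).direction =
      if Γ.Colorable 2 then Fintype.card V - 2 else Fintype.card V - 1 := by
  classical
  open EdgePolyAux Module Submodule in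
  set S : Set (V → ℝ) := edgePoint '' Γ.edgeSet with hS
  set Wm : Submodule ℝ (V → ℝ) := Submodule.span ℝ S with hWm
  set D : Submodule ℝ (V → ℝ) := vectorSpan ℝ S with hD
  set n : ℕ := Fintype.card V with hn
  -- a fixed edge
  have hex : ∃ a b : V, Γ.Adj a b := by
    obtain ⟨e, he⟩ := hne
    revert he
    induction e using Sym2.ind with
    | _ x y => intro he; exact ⟨x, y, he⟩
  obtain ⟨a, b, hab⟩ := hex
  have hWadj : ∀ {i j : V}, Γ.Adj i j → (Pi.single i 1 + Pi.single j 1 : V → ℝ) ∈ Wm := by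
    intro i j hij
    exact Submodule.subset_span ⟨s(i, j), Γ.mem_edgeSet.mpr hij, edgePoint_eq hij.ne⟩
  set p₀ : V → ℝ := Pi.single a 1 + Pi.single b 1 with hp₀def
  have hp₀S : p₀ ∈ S := ⟨s(a, b), Γ.mem_edgeSet.mpr hab, edgePoint_eq hab.ne⟩
  -- all points of S sum to 2
  set sumF : (V → ℝ) →ₗ[ℝ] ℝ := wF (fun _ => (1 : ℝ)) with hsumF
  have hSsum : ∀ x ∈ S, sumF x = 2 := by
    rintro x ⟨e, he, rfl⟩
    revert he
    induction e using Sym2.ind with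
    | _ i j =>
      intro he
      have hij : Γ.Adj i j := Γ.mem_edgeSet.mp he
      rw [edgePoint_eq hij.ne, map_add, wF_single, wF_single]
      norm_num
  have hD_ker : D ≤ LinearMap.ker sumF := by
    rw [hD, vectorSpan_def, Submodule.span_le]
    rintro x ⟨p, hp, q, hq, rfl⟩
    simp only [SetLike.mem_coe, LinearMap.mem_ker, vsub_eq_sub, map_sub,
      hSsum p hp, hSsum q hq, sub_self]
  have hp₀D : p₀ ∉ D := by
    intro hmem
    have := hD_ker hmem
    rw [LinearMap.mem_ker, hSsum p₀ hp₀S] at this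
    norm_num at this
  have hp₀ne : p₀ ≠ 0 := by
    intro h
    have := congrFun h a
    simp [hp₀def, Pi.single_apply, hab.ne] at this
  -- Wm = D ⊔ span {p₀}
  have hWD : Wm = D ⊔ Submodule.span ℝ {p₀} := by
    apply le_antisymm
    · rw [hWm, Submodule.span_le]
      intro x hx
      have h1 : x - p₀ ∈ D := by
        have := vsub_mem_vectorSpan ℝ hx hp₀S
        rwa [vsub_eq_sub] at this
      have : x = (x - p₀) + p₀ := by ring
      rw [this]
      exact Submodule.add_mem _ (Submodule.mem_sup_left h1)
        (Submodule.mem_sup_right (Submodule.mem_span_singleton_self _))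
    · apply sup_le
      · rw [hD, vectorSpan_def, Submodule.span_le]
        rintro x ⟨p, hp, q, hq, rfl⟩
        exact Submodule.sub_mem _ (Submodule.subset_span hp) (Submodule.subset_span hq)
      · rw [Submodule.span_le, Set.singleton_subset_iff]
        exact Submodule.subset_span hp₀S
  have hinf : D ⊓ Submodule.span ℝ {p₀} = ⊥ := by
    rw [eq_bot_iff]
    rintro x ⟨hxD, hxP⟩
    obtain ⟨c, rfl⟩ := Submodule.mem_span_singleton.mp hxP
    have h1 : sumF (c • p₀) = 0 := hD_ker hxD
    rw [map_smul, hSsum p₀ hp₀S, smul_eq_mul] at h1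
    have : c = 0 := by linarith
    simp [this]
  have hrank : finrank ℝ Wm = finrank ℝ D + 1 := by
    have h1 := Submodule.finrank_sup_add_finrank_inf_eq D (Submodule.span ℝ {p₀})
    rw [hinf, finrank_bot, finrank_span_singleton hp₀ne, ← hWD] at h1
    omega
  have hVn : finrank ℝ (V → ℝ) = n := Module.finrank_pi ℝ
  have hcard2 : 2 ≤ n := Fintype.one_lt_card_iff.mpr ⟨a, b, hab.ne⟩
  rw [direction_affineSpan, ← hD]
  by_cases hb : Γ.Colorable 2
  · -- bipartite case
    rw [if_pos hb]
    obtain ⟨c⟩ := hb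
    set sg : V → ℝ := fun v => if c v = 0 then 1 else -1 with hsg
    set g : (V → ℝ) →ₗ[ℝ] ℝ := wF sg with hg
    have hfin2 : ∀ x : Fin 2, x = 0 ∨ x = 1 := by decide
    have hWker : Wm ≤ LinearMap.ker g := by
      rw [hWm, Submodule.span_le]
      rintro x ⟨e, he, rfl⟩
      revert he
      induction e using Sym2.ind with
      | _ i j =>
        intro he
        have hij : Γ.Adj i j := Γ.mem_edgeSet.mp he
        have hcij := c.valid hij
        rw [SetLike.mem_coe, LinearMap.mem_ker, edgePoint_eq hij.ne, map_add,
          hg, wF_single, wF_single, hsg]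
        rcases hfin2 (c i) with h1 | h1 <;> rcases hfin2 (c j) with h2 | h2 <;>
          simp_all
    have hsga : sg a ≠ 0 := by
      rw [hsg]; dsimp only; split_ifs <;> norm_num
    have hrange : LinearMap.range g = ⊤ := by
      rw [LinearMap.range_eq_top]
      intro y
      refine ⟨(y / sg a) • (Pi.single a 1 : V → ℝ), ?_⟩
      rw [map_smul, wF_single, smul_eq_mul, div_mul_cancel₀ _ hsga]
    have hker_rank : finrank ℝ (LinearMap.ker g) = n - 1 := by
      have h1 := LinearMap.finrank_range_add_finrank_ker g
      rw [hrange, finrank_top, hVn, Module.finrank_self] at h1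
      omega
    have hupper : finrank ℝ Wm ≤ n - 1 := hker_rank ▸ Submodule.finrank_mono hWker
    -- lower bound
    have hδ : ∀ u : V, (Pi.single u 1 : V → ℝ) ∈ Wm ⊔ Submodule.span ℝ {(Pi.single a 1 : V → ℝ)} := by
      intro u
      obtain ⟨p⟩ := hconn.preconnected u a
      have h1 := walk_mem Γ Wm (fun {i j} h => hWadj h) p
      have h2 : (Pi.single u 1 : V → ℝ) =
          ((Pi.single u 1 : V → ℝ) - ((-1 : ℝ) ^ p.length) • (Pi.single a 1 : V → ℝ))
            + ((-1 : ℝ) ^ p.length) • (Pi.single a 1 : V → ℝ) := by ring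
      rw [h2]
      exact Submodule.add_mem _ (Submodule.mem_sup_left h1)
        (Submodule.mem_sup_right (Submodule.smul_mem _ _ (Submodule.mem_span_singleton_self _)))
    have htop : Wm ⊔ Submodule.span ℝ {(Pi.single a 1 : V → ℝ)} = ⊤ := by
      rw [eq_top_iff]
      intro x _
      have hmem : ∑ v, x v • (Pi.single v 1 : V → ℝ) ∈
          Wm ⊔ Submodule.span ℝ {(Pi.single a 1 : V → ℝ)} :=
        Submodule.sum_mem _ fun v _ => Submodule.smul_mem _ _ (hδ v)
      rwa [← single_decomp x] at hmem
    have hδa_ne : (Pi.single a 1 : V → ℝ) ≠ 0 := by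
      intro h
      have := congrFun h a
      simp [Pi.single_apply] at this
    have hlow : n ≤ finrank ℝ Wm + 1 := by
      have h1 := Submodule.finrank_sup_add_finrank_inf_eq Wm
        (Submodule.span ℝ {(Pi.single a 1 : V → ℝ)})
      rw [htop, finrank_top, hVn, finrank_span_singleton hδa_ne] at h1
      omega
    omega
  · -- non-bipartite case
    rw [if_neg hb]
    have hWtop : Wm = ⊤ := by
      by_contra hne'
      have hlt : Wm < ⊤ := lt_top_iff_ne_top.mpr hne'
      obtain ⟨f, hf0, hfmap⟩ := Submodule.exists_dual_map_eq_bot_of_lt_top hlt inferInstance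
      have hker : Wm ≤ LinearMap.ker f := by
        intro x hx
        have hx2 : f x ∈ Submodule.map f Wm := Submodule.mem_map_of_mem hx
        rw [hfmap, Submodule.mem_bot] at hx2
        exact LinearMap.mem_ker.mpr hx2
      have hfadj : ∀ {i j : V}, Γ.Adj i j → f (Pi.single i 1) = - f (Pi.single j 1) := by
        intro i j hij
        have := hker (hWadj hij)
        rw [LinearMap.mem_ker, map_add] at this
        linarith
      have hfnz : ∀ v : V, f (Pi.single v 1) ≠ 0 := by
        by_contra hc
        push_neg at hc
        obtain ⟨v₀, hv₀⟩ := hc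
        have hall : ∀ u : V, f (Pi.single u 1) = 0 := by
          intro u
          obtain ⟨p⟩ := hconn.preconnected v₀ u
          exact walk_zero Γ f (fun {i j} h => hfadj h) p hv₀
        apply hf0
        apply LinearMap.ext
        intro x
        have hfx : f (∑ v, x v • (Pi.single v 1 : V → ℝ)) = 0 := by
          rw [map_sum]
          simp [map_smul, hall]
        rwa [← single_decomp x] at hfx
      exact hb ⟨SimpleGraph.Coloring.mk
        (fun v => if 0 < f (Pi.single v 1) then 0 else 1)
        (by
          intro u v h
          have h1 := hfadj h
          by_cases hu : 0 < f (Pi.single u 1) <;> by_cases hv : 0 < f (Pi.single v 1) <;>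
            simp only [hu, hv, if_pos, if_neg, if_true, if_false] <;> first
            | (intro _; linarith)
            | (intro _;
               exact hfnz v (le_antisymm (not_lt.mp hv) (by linarith [not_lt.mp hu])))
            | simp)⟩
    have : finrank ℝ Wm = n := by rw [hWtop, finrank_top, hVn]
    omega
end
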